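/- Let I_n be the ideal generated by the monomials of all tilings in T_n, let V_n be the ideal generated by the tilings containing y_n and U_n the ideal generated by the tilings containing x_{n-1}x_{2n-2}. Then V_n = y_n · I'_{n-1} and U_n = x_{n-1}x_{2n-2} · I'_{n-2}, where I'_{n-1} and I'_{n-2} denote the domino ideals of the 2×(n-1) and 2×(n-2) rectangles regarded inside R via the inclusion of variables. -/
import Mathlib


/-- The vertical domino occupying column `k` (0-indexed) of a 2×n board. -/
def Vert (k : ℕ) : Finset (ℕ × ℕ) := {(0, k), (1, k)}

/-- The horizontal domino in row `i` covering columns `k` and `k+1`. -/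
def Horiz (i k : ℕ) : Finset (ℕ × ℕ) := {(i, k), (i, k + 1)}

/-- A domino on the 2×n board. -/
def IsDomino (n : ℕ) (d : Finset (ℕ × ℕ)) : Prop :=
  (∃ k < n, d = Vert k) ∨ (∃ i < 2, ∃ k, k + 1 < n ∧ d = Horiz i k)

/-- `T` is a domino tiling of the 2×n board: a set of dominoes, pairwise disjoint,
covering exactly the cells of the board. -/
def IsTiling (n : ℕ) (T : Finset (Finset (ℕ × ℕ))) : Prop :=
  (∀ d ∈ T, IsDomino n d) ∧
  (∀ c : ℕ × ℕ, (c.1 < 2 ∧ c.2 < n) ↔ ∃ d ∈ T, c ∈ d) ∧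
  (∀ d ∈ T, ∀ e ∈ T, d ≠ e → Disjoint d e)

/-- `T_n`, the set of all domino tilings of the 2×n rectangle. -/
def Tilings (n : ℕ) : Set (Finset (Finset (ℕ × ℕ))) := {T | IsTiling n T}

open scoped Classical

/-- The variable (in the paper's 1-indexed labelling) attached to a domino of the 2×n board:
the vertical domino in column k (1-indexed) ↦ y_k = `Sum.inr k`, the top horizontal domino
starting in column k ↦ x_k = `Sum.inl k`, the bottom one ↦ x_{n-1+k} = `Sum.inl (n-1+k)`. -/
noncomputable def dominoVar (n : ℕ) (d : Finset (ℕ × ℕ)) : ℕ ⊕ ℕ :=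
  if h : ∃ k, d = Vert k then Sum.inr (h.choose + 1)
  else if h2 : ∃ k, d = Horiz 0 k then Sum.inl (h2.choose + 1)
  else if h3 : ∃ k, d = Horiz 1 k then Sum.inl (n + h3.choose)
  else Sum.inl 0

/-- The squarefree monomial (in `K[x_1,…,x_{2n-2},y_1,…,y_n]`, realized as
`MvPolynomial (ℕ ⊕ ℕ) K` with x_i = `X (Sum.inl i)` and y_i = `X (Sum.inr i)`)
associated to a tiling `T`, using the labelling of the 2×n board. -/
noncomputable def dominoMonomial (K : Type*) [Field K] (n : ℕ)
    (T : Finset (Finset (ℕ × ℕ))) : MvPolynomial (ℕ ⊕ ℕ) K :=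
  ∏ d ∈ T, MvPolynomial.X (dominoVar n d)

/-- The ideal generated by the tiling monomials of all tilings of a 2×m rectangle,
labelled as dominoes of the ambient 2×n board. -/
noncomputable def dominoIdealIn (K : Type*) [Field K] (n m : ℕ) :
    Ideal (MvPolynomial (ℕ ⊕ ℕ) K) :=
  Ideal.span {p | ∃ T, IsTiling m T ∧ p = dominoMonomial K n T}

/-- The domino ideal `I_n`. -/
noncomputable def dominoIdeal (K : Type*) [Field K] (n : ℕ) :
    Ideal (MvPolynomial (ℕ ⊕ ℕ) K) := dominoIdealIn K n n

/-- `V_n`: the ideal generated by the tilings containing the vertical domino `y_n`. -/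
noncomputable def Vn (K : Type*) [Field K] (n : ℕ) : Ideal (MvPolynomial (ℕ ⊕ ℕ) K) :=
  Ideal.span {p | ∃ T, IsTiling n T ∧ Vert (n - 1) ∈ T ∧ p = dominoMonomial K n T}

/-- `U_n`: the ideal generated by the tilings containing the two rightmost horizontal
dominoes `x_{n-1}` and `x_{2n-2}`. -/
noncomputable def Un (K : Type*) [Field K] (n : ℕ) : Ideal (MvPolynomial (ℕ ⊕ ℕ) K) :=
  Ideal.span {p | ∃ T, IsTiling n T ∧ Horiz 0 (n - 2) ∈ T ∧ Horiz 1 (n - 2) ∈ T ∧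
    p = dominoMonomial K n T}

/-- The set of (exponent vectors of) minimal monomial generators of a monomial ideal:
monomials of the ideal not strictly divisible by any other monomial of the ideal. -/
def minGens {K : Type*} [Field K] {σ : Type*} (I : Ideal (MvPolynomial σ K)) :
    Set (σ →₀ ℕ) :=
  {a | MvPolynomial.monomial a (1 : K) ∈ I ∧
      ∀ b : σ →₀ ℕ, b ≤ a → MvPolynomial.monomial b (1 : K) ∈ I → b = a}

lemma mem_Vert {c : ℕ × ℕ} {k : ℕ} : c ∈ Vert k ↔ c = (0, k) ∨ c = (1, k) := by
  simp [Vert]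

lemma mem_Horiz {c : ℕ × ℕ} {i k : ℕ} : c ∈ Horiz i k ↔ c = (i, k) ∨ c = (i, k + 1) := by
  simp [Horiz]

lemma Vert_inj {k k' : ℕ} (h : Vert k = Vert k') : k = k' := by
  have h0 : ((0, k) : ℕ × ℕ) ∈ Vert k' := h ▸ (by simp [Vert])
  simp [Vert, Prod.ext_iff] at h0
  omega

lemma Horiz_inj {i k i' k' : ℕ} (h : Horiz i k = Horiz i' k') : i = i' ∧ k = k' := by
  have h0 : ((i, k) : ℕ × ℕ) ∈ Horiz i' k' := h ▸ (by simp [Horiz])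
  have h1 : ((i, k + 1) : ℕ × ℕ) ∈ Horiz i' k' := h ▸ (by simp [Horiz])
  simp [Horiz, Prod.ext_iff] at h0 h1
  omega

lemma Vert_ne_Horiz {k i k' : ℕ} : Vert k ≠ Horiz i k' := by
  intro h
  have h0 : ((0, k) : ℕ × ℕ) ∈ Horiz i k' := h ▸ (by simp [Vert])
  have h1 : ((1, k) : ℕ × ℕ) ∈ Horiz i k' := h ▸ (by simp [Vert])
  simp [Horiz, Prod.ext_iff] at h0 h1
  omega

lemma cell_bound {n : ℕ} {T : Finset (Finset (ℕ × ℕ))} (hT : IsTiling n T) {d} (hd : d ∈ T)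
    {c : ℕ × ℕ} (hc : c ∈ d) : c.1 < 2 ∧ c.2 < n := (hT.2.1 c).2 ⟨d, hd, hc⟩

lemma tiling_erase_vert {n : ℕ} {T : Finset (Finset (ℕ × ℕ))} (hT : IsTiling (n + 1) T)
    (hv : Vert n ∈ T) : IsTiling n (T.erase (Vert n)) := by
  obtain ⟨hdom, hcov, hdisj⟩ := hT
  have key : ∀ d ∈ T, d ≠ Vert n → ∀ c ∈ d, (c : ℕ × ℕ).2 < n := by
    intro d hd hne c hc
    rcases hdom d hd with ⟨k, hk, rfl⟩ | ⟨i, hi, k, hk, rfl⟩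
    · have hkn : k ≠ n := fun h => hne (by rw [h])
      rcases mem_Vert.1 hc with rfl | rfl <;> simp <;> omega
    · have hkn : k + 1 ≠ n := by
        intro h
        have hm : (i, n) ∈ Horiz i k := mem_Horiz.2 (Or.inr (by rw [h]))
        have hm' : (i, n) ∈ Vert n := by
          rcases (by omega : i = 0 ∨ i = 1) with rfl | rfl <;> simp [Vert]
        exact Finset.disjoint_left.1 (hdisj _ hd _ hv hne) hm hm'
      rcases mem_Horiz.1 hc with rfl | rfl <;> simp <;> omega
  refine ⟨?_, ?_, ?_⟩
  · intro d hd
    obtain ⟨hne, hdT⟩ := Finset.mem_erase.1 hd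
    rcases hdom d hdT with ⟨k, hk, rfl⟩ | ⟨i, hi, k, hk, rfl⟩
    · refine Or.inl ⟨k, ?_, rfl⟩
      have := key _ hdT hne (0, k) (by simp [Vert])
      simpa using this
    · refine Or.inr ⟨i, hi, k, ?_, rfl⟩
      have := key _ hdT hne (i, k + 1) (by simp [Horiz])
      simpa using this
  · intro c
    constructor
    · rintro ⟨h1, h2⟩
      obtain ⟨d, hd, hc⟩ := (hcov c).1 ⟨h1, by omega⟩
      refine ⟨d, Finset.mem_erase.2 ⟨?_, hd⟩, hc⟩
      rintro rfl
      rcases mem_Vert.1 hc with rfl | rfl <;> simp at h2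
    · rintro ⟨d, hd, hc⟩
      obtain ⟨hne, hdT⟩ := Finset.mem_erase.1 hd
      exact ⟨((hcov c).2 ⟨d, hdT, hc⟩).1, key _ hdT hne c hc⟩
  · intro d hd e he hne
    exact hdisj d (Finset.mem_erase.1 hd).2 e (Finset.mem_erase.1 he).2 hne

lemma vert_not_mem {n : ℕ} {T : Finset (Finset (ℕ × ℕ))} (hT : IsTiling n T) : Vert n ∉ T := by
  intro h
  have := (cell_bound hT h (c := (0, n)) (by simp [Vert])).2
  simp at this

lemma tiling_insert_vert {n : ℕ} {T : Finset (Finset (ℕ × ℕ))} (hT : IsTiling n T) :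
    IsTiling (n + 1) (insert (Vert n) T) := by
  obtain ⟨hdom, hcov, hdisj⟩ := hT
  have hkey : ∀ d ∈ T, ∀ c ∈ d, (c : ℕ × ℕ).1 < 2 ∧ c.2 < n :=
    fun d hd c hc => (hcov c).2 ⟨d, hd, hc⟩
  refine ⟨?_, ?_, ?_⟩
  · intro d hd
    rcases Finset.mem_insert.1 hd with rfl | hd
    · exact Or.inl ⟨n, by omega, rfl⟩
    · rcases hdom d hd with ⟨k, hk, rfl⟩ | ⟨i, hi, k, hk, rfl⟩
      · exact Or.inl ⟨k, by omega, rfl⟩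
      · exact Or.inr ⟨i, hi, k, by omega, rfl⟩
  · rintro ⟨a, b⟩
    constructor
    · rintro ⟨h1, h2⟩
      simp only at h1 h2
      by_cases h : b < n
      · obtain ⟨d, hd, hc⟩ := (hcov (a, b)).1 ⟨h1, h⟩
        exact ⟨d, Finset.mem_insert_of_mem hd, hc⟩
      · have hb : b = n := by omega
        refine ⟨Vert n, Finset.mem_insert_self _ _, ?_⟩
        rcases (by omega : a = 0 ∨ a = 1) with rfl | rfl <;> simp [Vert, hb]
    · rintro ⟨d, hd, hc⟩
      rcases Finset.mem_insert.1 hd with rfl | hd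
      · rcases mem_Vert.1 hc with h | h <;>
          · rw [Prod.ext_iff] at h
            simp only at h ⊢
            omega
      · obtain ⟨hc1, hc2⟩ := hkey d hd _ hc
        simp only at hc1 hc2 ⊢
        omega
  · intro d hd e he hne
    rcases Finset.mem_insert.1 hd with rfl | hd <;> rcases Finset.mem_insert.1 he with rfl | he
    · exact absurd rfl hne
    · refine Finset.disjoint_left.2 fun c hc hce => ?_
      have h2 := (hkey e he c hce).2
      rcases mem_Vert.1 hc with rfl | rfl <;> simp at h2
    · refine Finset.disjoint_left.2 fun c hc hce => ?_
      have h2 := (hkey d hd c hc).2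
      rcases mem_Vert.1 hce with rfl | rfl <;> simp at h2
    · exact hdisj d hd e he hne

lemma tiling_erase_horiz {n : ℕ} {T : Finset (Finset (ℕ × ℕ))} (hT : IsTiling (n + 2) T)
    (hH0 : Horiz 0 n ∈ T) (hH1 : Horiz 1 n ∈ T) :
    IsTiling n ((T.erase (Horiz 0 n)).erase (Horiz 1 n)) := by
  obtain ⟨hdom, hcov, hdisj⟩ := hT
  have key : ∀ d ∈ T, d ≠ Horiz 0 n → d ≠ Horiz 1 n → ∀ c ∈ d, (c : ℕ × ℕ).2 < n := by
    intro d hd hne0 hne1 c hc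
    rcases hdom d hd with ⟨k, hk, rfl⟩ | ⟨i, hi, k, hk, rfl⟩
    · have hk1 : k ≠ n := by
        rintro rfl
        exact Finset.disjoint_left.1 (hdisj _ hd _ hH0 Vert_ne_Horiz)
          (mem_Vert.2 (Or.inl rfl)) (mem_Horiz.2 (Or.inl rfl))
      have hk2 : k ≠ n + 1 := by
        rintro rfl
        exact Finset.disjoint_left.1 (hdisj _ hd _ hH0 Vert_ne_Horiz)
          (mem_Vert.2 (Or.inl rfl)) (mem_Horiz.2 (Or.inr rfl))
      rcases mem_Vert.1 hc with rfl | rfl <;> simp <;> omega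
    · have hin : i = 0 ∨ i = 1 := by omega
      have hk2 : k ≠ n := by
        rintro rfl
        rcases hin with rfl | rfl
        · exact hne0 rfl
        · exact hne1 rfl
      have hk1 : k + 1 ≠ n := by
        intro h
        have hne : Horiz i k ≠ Horiz i n := fun he => by have := (Horiz_inj he).2; omega
        have hm : (i, k + 1) ∈ Horiz i k := mem_Horiz.2 (Or.inr rfl)
        have hm' : (i, k + 1) ∈ Horiz i n := mem_Horiz.2 (Or.inl (by rw [h]))
        rcases hin with rfl | rfl
        · exact Finset.disjoint_left.1 (hdisj _ hd _ hH0 hne) hm hm'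
        · exact Finset.disjoint_left.1 (hdisj _ hd _ hH1 hne) hm hm'
      rcases mem_Horiz.1 hc with rfl | rfl <;> simp <;> omega
  have hmem : ∀ d, d ∈ (T.erase (Horiz 0 n)).erase (Horiz 1 n) ↔
      d ≠ Horiz 1 n ∧ d ≠ Horiz 0 n ∧ d ∈ T := by
    intro d; simp [Finset.mem_erase, and_assoc]
  refine ⟨?_, ?_, ?_⟩
  · intro d hd
    obtain ⟨hne1, hne0, hdT⟩ := (hmem d).1 hd
    rcases hdom d hdT with ⟨k, hk, rfl⟩ | ⟨i, hi, k, hk, rfl⟩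
    · refine Or.inl ⟨k, ?_, rfl⟩
      have := key _ hdT hne0 hne1 (0, k) (by simp [Vert])
      simpa using this
    · refine Or.inr ⟨i, hi, k, ?_, rfl⟩
      have := key _ hdT hne0 hne1 (i, k + 1) (by simp [Horiz])
      simpa using this
  · intro c
    constructor
    · rintro ⟨h1, h2⟩
      obtain ⟨d, hd, hc⟩ := (hcov c).1 ⟨h1, by omega⟩
      refine ⟨d, (hmem d).2 ⟨?_, ?_, hd⟩, hc⟩
      · rintro rfl
        rcases mem_Horiz.1 hc with rfl | rfl <;> simp at h2 <;> omega
      · rintro rfl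
        rcases mem_Horiz.1 hc with rfl | rfl <;> simp at h2 <;> omega
    · rintro ⟨d, hd, hc⟩
      obtain ⟨hne1, hne0, hdT⟩ := (hmem d).1 hd
      exact ⟨((hcov c).2 ⟨d, hdT, hc⟩).1, key _ hdT hne0 hne1 c hc⟩
  · intro d hd e he hne
    exact hdisj d ((hmem d).1 hd).2.2 e ((hmem e).1 he).2.2 hne

lemma horiz_not_mem {n i : ℕ} {T : Finset (Finset (ℕ × ℕ))} (hT : IsTiling n T) :
    Horiz i n ∉ T := by
  intro h
  have := (cell_bound hT h (c := (i, n)) (by simp [Horiz])).2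
  simp at this

lemma horiz_ne_horiz' {n : ℕ} : Horiz 0 n ≠ Horiz 1 n := fun h => by
  simpa using (Horiz_inj h).1

lemma tiling_insert_horiz {n : ℕ} {T : Finset (Finset (ℕ × ℕ))} (hT : IsTiling n T) :
    IsTiling (n + 2) (insert (Horiz 0 n) (insert (Horiz 1 n) T)) := by
  obtain ⟨hdom, hcov, hdisj⟩ := hT
  have hkey : ∀ d ∈ T, ∀ c ∈ d, (c : ℕ × ℕ).1 < 2 ∧ c.2 < n :=
    fun d hd c hc => (hcov c).2 ⟨d, hd, hc⟩
  have dHT : ∀ i, ∀ d ∈ T, Disjoint (Horiz i n) d := by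
    intro i d hd
    refine Finset.disjoint_left.2 fun c hc hcd => ?_
    have h2 := (hkey d hd c hcd).2
    rcases mem_Horiz.1 hc with rfl | rfl <;> simp at h2 <;> omega
  have dH01 : Disjoint (Horiz 0 n) (Horiz 1 n) := by
    refine Finset.disjoint_left.2 fun c hc hc' => ?_
    rcases mem_Horiz.1 hc with rfl | rfl <;>
      rcases mem_Horiz.1 hc' with h | h <;> simp [Prod.ext_iff] at h
  refine ⟨?_, ?_, ?_⟩
  · intro d hd
    simp only [Finset.mem_insert] at hd
    rcases hd with rfl | rfl | hd
    · exact Or.inr ⟨0, by omega, n, by omega, rfl⟩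
    · exact Or.inr ⟨1, by omega, n, by omega, rfl⟩
    · rcases hdom d hd with ⟨k, hk, rfl⟩ | ⟨i, hi, k, hk, rfl⟩
      · exact Or.inl ⟨k, by omega, rfl⟩
      · exact Or.inr ⟨i, hi, k, by omega, rfl⟩
  · rintro ⟨a, b⟩
    constructor
    · rintro ⟨h1, h2⟩
      simp only at h1 h2
      by_cases h : b < n
      · obtain ⟨d, hd, hc⟩ := (hcov (a, b)).1 ⟨h1, h⟩
        exact ⟨d, by simp [hd], hc⟩
      · have hb : b = n ∨ b = n + 1 := by omega
        rcases (by omega : a = 0 ∨ a = 1) with rfl | rfl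
        · exact ⟨Horiz 0 n, by simp, by rcases hb with rfl | rfl <;> simp [Horiz]⟩
        · exact ⟨Horiz 1 n, by simp, by rcases hb with rfl | rfl <;> simp [Horiz]⟩
    · rintro ⟨d, hd, hc⟩
      simp only [Finset.mem_insert] at hd
      rcases hd with rfl | rfl | hd
      · rcases mem_Horiz.1 hc with h | h <;>
          · rw [Prod.ext_iff] at h; simp only at h ⊢; omega
      · rcases mem_Horiz.1 hc with h | h <;>
          · rw [Prod.ext_iff] at h; simp only at h ⊢; omega
      · obtain ⟨hc1, hc2⟩ := hkey d hd _ hc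
        exact ⟨hc1, by omega⟩
  · intro d hd e he hne
    simp only [Finset.mem_insert] at hd he
    rcases hd with rfl | rfl | hd <;> rcases he with rfl | rfl | he
    · exact absurd rfl hne
    · exact dH01
    · exact dHT 0 e he
    · exact dH01.symm
    · exact absurd rfl hne
    · exact dHT 1 e he
    · exact (dHT 0 d hd).symm
    · exact (dHT 1 d hd).symm
    · exact hdisj d hd e he hne

lemma dominoVar_Vert (n k : ℕ) : dominoVar n (Vert k) = Sum.inr (k + 1) := by
  have h : ∃ k', Vert k = Vert k' := ⟨k, rfl⟩
  simp only [dominoVar, dif_pos h]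
  rw [← Vert_inj h.choose_spec]

lemma dominoVar_Horiz0 (n k : ℕ) : dominoVar n (Horiz 0 k) = Sum.inl (k + 1) := by
  have h1 : ¬ ∃ k', Horiz 0 k = Vert k' := by
    rintro ⟨k', hk⟩; exact Vert_ne_Horiz hk.symm
  have h2 : ∃ k', Horiz 0 k = Horiz 0 k' := ⟨k, rfl⟩
  simp only [dominoVar, dif_neg h1, dif_pos h2]
  rw [← (Horiz_inj h2.choose_spec).2]

lemma dominoVar_Horiz1 (n k : ℕ) : dominoVar n (Horiz 1 k) = Sum.inl (n + k) := by
  have h1 : ¬ ∃ k', Horiz 1 k = Vert k' := by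
    rintro ⟨k', hk⟩; exact Vert_ne_Horiz hk.symm
  have h2 : ¬ ∃ k', Horiz 1 k = Horiz 0 k' := by
    rintro ⟨k', hk⟩; simpa using (Horiz_inj hk).1
  have h3 : ∃ k', Horiz 1 k = Horiz 1 k' := ⟨k, rfl⟩
  simp only [dominoVar, dif_neg h1, dif_neg h2, dif_pos h3]
  rw [← (Horiz_inj h3.choose_spec).2]

lemma Vn_eq (K : Type*) [Field K] (m : ℕ) :
    Vn K (m + 1) =
      Ideal.span {MvPolynomial.X (Sum.inr (m + 1))} * dominoIdealIn K (m + 1) m := by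
  rw [Vn, dominoIdealIn, Ideal.span_mul_span']
  congr 1
  ext p
  simp only [Nat.add_sub_cancel, Set.mem_setOf_eq, Set.singleton_mul, Set.mem_image]
  constructor
  · rintro ⟨T, hT, hv, rfl⟩
    refine ⟨dominoMonomial K (m + 1) (T.erase (Vert m)),
      ⟨T.erase (Vert m), tiling_erase_vert hT hv, rfl⟩, ?_⟩
    have := Finset.mul_prod_erase T (fun d => (MvPolynomial.X (dominoVar (m + 1) d) : MvPolynomial (ℕ ⊕ ℕ) K)) hv
    simp only [dominoVar_Vert] at this
    exact this
  · rintro ⟨q, ⟨T', hT', rfl⟩, rfl⟩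
    refine ⟨insert (Vert m) T', tiling_insert_vert hT', Finset.mem_insert_self _ _, ?_⟩
    simp only [dominoMonomial]
    rw [Finset.prod_insert (vert_not_mem hT'), dominoVar_Vert]

lemma Un_eq (K : Type*) [Field K] (m : ℕ) :
    Un K (m + 2) =
      Ideal.span {(MvPolynomial.X (Sum.inl (m + 1)) : MvPolynomial (ℕ ⊕ ℕ) K) *
          MvPolynomial.X (Sum.inl (m + 2 + m))} * dominoIdealIn K (m + 2) m := by
  rw [Un, dominoIdealIn, Ideal.span_mul_span']
  congr 1
  ext p
  simp only [Nat.add_sub_cancel, Set.mem_setOf_eq, Set.singleton_mul, Set.mem_image]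
  constructor
  · rintro ⟨T, hT, hH0, hH1, rfl⟩
    have hH1' : Horiz 1 m ∈ T.erase (Horiz 0 m) :=
      Finset.mem_erase.2 ⟨fun h => horiz_ne_horiz' h.symm, hH1⟩
    refine ⟨dominoMonomial K (m + 2) ((T.erase (Horiz 0 m)).erase (Horiz 1 m)),
      ⟨(T.erase (Horiz 0 m)).erase (Horiz 1 m), tiling_erase_horiz hT hH0 hH1, rfl⟩, ?_⟩
    have e1 := Finset.mul_prod_erase T (fun d => (MvPolynomial.X (dominoVar (m + 2) d) : MvPolynomial (ℕ ⊕ ℕ) K)) hH0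
    have e2 := Finset.mul_prod_erase (T.erase (Horiz 0 m))
      (fun d => (MvPolynomial.X (dominoVar (m + 2) d) : MvPolynomial (ℕ ⊕ ℕ) K)) hH1'
    simp only [dominoVar_Horiz0] at e1
    simp only [dominoVar_Horiz1] at e2
    simp only [dominoMonomial]
    rw [← e1, ← e2]
    ring
  · rintro ⟨q, ⟨T', hT', rfl⟩, rfl⟩
    have h1 : Horiz 1 m ∉ T' := horiz_not_mem hT'
    have h0 : Horiz 0 m ∉ insert (Horiz 1 m) T' := by
      simp only [Finset.mem_insert, not_or]
      exact ⟨horiz_ne_horiz', horiz_not_mem hT'⟩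
    refine ⟨insert (Horiz 0 m) (insert (Horiz 1 m) T'), tiling_insert_horiz hT',
      Finset.mem_insert_self _ _, Finset.mem_insert_of_mem (Finset.mem_insert_self _ _), ?_⟩
    simp only [dominoMonomial]
    rw [Finset.prod_insert h0, Finset.prod_insert h1, dominoVar_Horiz0, dominoVar_Horiz1]
    ring

/-- V_n = y_n · I'_{n-1} and U_n = x_{n-1}x_{2n-2} · I'_{n-2}, where
I'_{m} is the domino ideal of the 2×m rectangle regarded inside R via the inclusion of
variables (with the 2×n labelling of horizontal dominoes). -/
theorem Vn_Un_eq_shifted_domino_ideals (K : Type*) [Field K] :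
    ∀ n : ℕ, 3 ≤ n →
      Vn K n = Ideal.span {MvPolynomial.X (Sum.inr n)} * dominoIdealIn K n (n - 1) ∧
      Un K n = Ideal.span
          {(MvPolynomial.X (Sum.inl (n - 1)) : MvPolynomial (ℕ ⊕ ℕ) K) *
            MvPolynomial.X (Sum.inl (2 * n - 2))} * dominoIdealIn K n (n - 2) := by
  intro n hn
  obtain ⟨m, rfl⟩ : ∃ m, n = m + 3 := ⟨n - 3, by omega⟩
  constructor
  · have h1 : m + 3 - 1 = m + 2 := rfl
    rw [h1]
    exact Vn_eq K (m + 2)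
  · have h1 : m + 3 - 1 = m + 2 := rfl
    have h2 : 2 * (m + 3) - 2 = m + 1 + 2 + (m + 1) := by omega
    have h3 : m + 3 - 2 = m + 1 := rfl
    rw [h1, h2, h3]
    exact Un_eq K (m + 1)
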